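/- For every loopless digraph D on n vertices, the star dichromatic number χ⃗*(D) is a rational number expressible as k/d for natural numbers 1 ≤ d ≤ k ≤ n. -/

import Mathlib

open Finset

variable {V : Type*}

/-- `v :: l` forms a directed cycle of the digraph with arc relation `E`:
the vertices are pairwise distinct and each one has an arc to the next, cyclically. -/
def IsDicycle (E : V → V → Prop) (v : V) (l : List V) : Prop :=
  (v :: l).Nodup ∧ List.Chain E v (l ++ [v])

/-- The vertex set `A` induces an acyclic subdigraph of the digraph `E`:
no directed cycle of `E` has all of its vertices in `A`. -/
def AcyclicOn (E : V → V → Prop) (A : Set V) : Prop :=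
  ∀ v l, IsDicycle E v l → ¬ (∀ x ∈ v :: l, x ∈ A)

/-- The open arc of length 1 in `ℝ/pℤ` starting at (the image of) `a`. -/
def unitArc (p a : ℝ) : Set (AddCircle p) :=
  (fun x : ℝ => (x : AddCircle p)) '' Set.Ioo a (a + 1)

/-- An acyclic `p`-colouring of the digraph `E` : the preimage of every open arc
of length 1 induces an acyclic subdigraph. -/
def IsAcyclicColouring (E : V → V → Prop) (p : ℝ) (c : V → AddCircle p) : Prop :=
  ∀ a : ℝ, AcyclicOn E (c ⁻¹' unitArc p a)

/-- The star dichromatic number of a digraph. -/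
noncomputable def starDichromatic (E : V → V → Prop) : ℝ :=
  sInf {p : ℝ | 1 ≤ p ∧ ∃ c : V → AddCircle p, IsAcyclicColouring E p c}

/-- A weak circular `p`-colouring in the sense of Bokal et al. -/
def IsWeakCircularColouring (E : V → V → Prop) (p : ℝ) (c : V → AddCircle p) : Prop :=
  (∀ u w, E u w → c u = c w ∨
    ∃ r : ℝ, r ∈ Set.Ico (0 : ℝ) p ∧ (r : AddCircle p) = c w - c u ∧ 1 ≤ r) ∧
  ∀ t : AddCircle p, AcyclicOn E (c ⁻¹' {t})

/-- The circular dichromatic number of a digraph. -/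
noncomputable def circularDichromatic (E : V → V → Prop) : ℝ :=
  sInf {p : ℝ | 1 ≤ p ∧ ∃ c : V → AddCircle p, IsWeakCircularColouring E p c}

/-- The fractional dichromatic number: the optimal value of the covering linear
program over the acyclic vertex subsets. -/
noncomputable def fracDichromatic [Fintype V] [DecidableEq V] (E : V → V → Prop) : ℝ :=
  sInf {r : ℝ | ∃ x : Finset V → ℝ, (∀ A, 0 ≤ x A) ∧
    (∀ A : Finset V, x A ≠ 0 → AcyclicOn E ↑A) ∧
    (∀ v : V, 1 ≤ ∑ A ∈ Finset.univ.filter (fun A : Finset V => v ∈ A), x A) ∧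
    r = ∑ A : Finset V, x A}

/-- The cyclic interval `{i, i+1, ..., i+d-1}` in `ℤ/kℤ`. -/
def cycInterval (k : ℕ) (i : ZMod k) (d : ℕ) : Set (ZMod k) :=
  {j : ZMod k | ∃ t : ℕ, t < d ∧ j = i + (t : ZMod k)}

/-- An acyclic `(k,d)`-colouring of the digraph `E`. -/
def IsAcyclicKDColouring (E : V → V → Prop) (k d : ℕ) (c : V → ZMod k) : Prop :=
  ∀ i : ZMod k, AcyclicOn E (c ⁻¹' cycInterval k i d)

/-- The dichromatic number: the least `k` such that the vertex set can be partitioned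
into `k` classes each inducing an acyclic subdigraph. -/
noncomputable def dichromatic (E : V → V → Prop) : ℕ :=
  sInf {k : ℕ | ∃ c : V → Fin k, ∀ i : Fin k, AcyclicOn E (c ⁻¹' {i})}

/-- `v :: l` forms a cycle of the simple graph `G` (of length at least 3). -/
def IsGraphCycle (G : SimpleGraph V) (v : V) (l : List V) : Prop :=
  3 ≤ (v :: l).length ∧ (v :: l).Nodup ∧ List.Chain G.Adj v (l ++ [v])

/-- The vertex set `A` induces a forest (acyclic subgraph) in the simple graph `G`. -/
def ForestOn (G : SimpleGraph V) (A : Set V) : Prop :=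
  ∀ v l, IsGraphCycle G v l → ¬ (∀ x ∈ v :: l, x ∈ A)

/-- A `(k,d)`-tree-colouring of a graph. -/
def IsTreeColouring (G : SimpleGraph V) (k d : ℕ) (c : V → ZMod k) : Prop :=
  ∀ i : ZMod k, ForestOn G (c ⁻¹' cycInterval k i d)

/-- The circular vertex arboricity of a graph. -/
noncomputable def circularVertexArboricity (G : SimpleGraph V) : ℝ :=
  sInf {r : ℝ | ∃ k d : ℕ, 1 ≤ d ∧ d ≤ k ∧
    (∃ c : V → ZMod k, IsTreeColouring G k d c) ∧ r = (k : ℝ) / d}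

/-- `E` is an orientation of the simple graph `G`: for each edge exactly one of the
two possible arcs is present, and there are no other arcs. -/
def IsOrientation (G : SimpleGraph V) (E : V → V → Prop) : Prop :=
  ∀ u w, ((E u w ∨ E w u) ↔ G.Adj u w) ∧ ¬ (E u w ∧ E w u)

/-- The star dichromatic number of a graph: the maximum over all orientations. -/
noncomputable def starDichromaticGraph (G : SimpleGraph V) : ℝ :=
  sSup {r : ℝ | ∃ E : V → V → Prop, IsOrientation G E ∧ r = starDichromatic E}

/-- The fractional dichromatic number of a graph: the maximum over all orientations. -/
noncomputable def fracDichromaticGraph [Fintype V] [DecidableEq V] (G : SimpleGraph V) : ℝ :=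
  sSup {r : ℝ | ∃ E : V → V → Prop, IsOrientation G E ∧ r = fracDichromatic E}

/-- The fractional chromatic number of a graph: the optimal value of the covering
linear program over the independent vertex subsets. -/
noncomputable def fractionalChromatic [Fintype V] [DecidableEq V] (G : SimpleGraph V) : ℝ :=
  sInf {r : ℝ | ∃ x : Finset V → ℝ, (∀ A, 0 ≤ x A) ∧
    (∀ A : Finset V, x A ≠ 0 → ∀ u ∈ A, ∀ w ∈ A, ¬ G.Adj u w) ∧
    (∀ v : V, 1 ≤ ∑ A ∈ Finset.univ.filter (fun A : Finset V => v ∈ A), x A) ∧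
    r = ∑ A : Finset V, x A}

/-- A `(k,d)`-colouring of a graph in the sense of Vince: colours of adjacent vertices
have circular `k`-distance at least `d`. -/
def IsVinceColouring (G : SimpleGraph V) (k d : ℕ) (c : V → ZMod k) : Prop :=
  ∀ u w, G.Adj u w → d ≤ (c u - c w).val ∧ d ≤ (c w - c u).val

/-- Vince's star (circular) chromatic number of a graph. -/
noncomputable def starChromatic (G : SimpleGraph V) : ℝ :=
  sInf {r : ℝ | ∃ k d : ℕ, 1 ≤ d ∧ d ≤ k ∧
    (∃ c : V → ZMod k, IsVinceColouring G k d c) ∧ r = (k : ℝ) / d}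

/-- The circulant digraph `C⃗(k,d)` on `ℤ/kℤ`: each vertex `i` has the outgoing arcs
`(i, i+d), (i, i+d+1), …, (i, i+k-1)`. -/
def circulantDigraph (k d : ℕ) : ZMod k → ZMod k → Prop :=
  fun i j => ∃ t : ℕ, d ≤ t ∧ t < k ∧ j = i + (t : ZMod k)

/-- The directed cycle `C⃗_n` on `ℤ/nℤ`. -/
def dirCycle (n : ℕ) : ZMod n → ZMod n → Prop :=
  fun i j => j = i + 1

/-- The digraph `D^s` obtained from `D` by adding a dominating source `none`. -/
def addSource (E : V → V → Prop) : Option V → Option V → Prop :=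
  fun a b => match a, b with
  | none, some _ => True
  | some u, some w => E u w
  | _, none => False

/-- The wheel graph `W_k`: a cycle on `ℤ/kℤ` together with a hub `none` adjacent to
every cycle vertex. -/
def wheelGraph (k : ℕ) : SimpleGraph (Option (ZMod k)) :=
  SimpleGraph.fromRel (fun a b => match a, b with
    | none, some _ => True
    | some i, some j => j = i + 1
    | _, none => False)

/-!
By compactness the infimum `p` defining `χ⃗*(D)` is attained by a colouring `x : V → ℝ` (colours
lifted from `ℝ/pℤ`); it is at most `n`, the value of an injective colouring by `0, …, n - 1`.
Suppose `p > 1`. If for some vertex the orbit `x v, x v + 1, x v + 2, …` in `ℝ/pℤ` stays among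
the at most `n` colours, two of its first `n + 1` points coincide, so `k = d p` with `d ≤ k ≤ n`.
Otherwise every orbit escapes the colour set, and the number of steps it needs is a height
function that drops by exactly one along tight pairs, i.e. pairs with `x w ≡ x v + 1`. Lowering each
colour by `δ` times its height then widens every forward gap of length at least `1` to at least
`1 + δ`, and dividing by `1 + δ` yields an acyclic colouring of period `p / (1 + δ) < p`.
-/

open Filter Topology

section UnitArc

variable {p : ℝ}

lemma toIcoMod_eq_iff_coe_eq (hp : 0 < p) {a s u : ℝ} :
    toIcoMod hp a s = u ↔ u ∈ Set.Ico a (a + p) ∧ (u : AddCircle p) = s := by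
  rw [toIcoMod_eq_iff, eq_comm (a := (u : AddCircle p)), ← sub_eq_zero, ← AddCircle.coe_sub,
    AddCircle.coe_eq_zero_iff]
  refine and_congr_right fun _ => exists_congr fun z => ?_
  constructor <;> intro h <;> linarith

lemma coe_toIcoMod (hp : 0 < p) (a s : ℝ) : ((toIcoMod hp a s : ℝ) : AddCircle p) = s :=
  ((toIcoMod_eq_iff_coe_eq hp).1 rfl).2

lemma toIcoMod_div (hp : 0 < p) {c : ℝ} (hc : 0 < c) (t : ℝ) :
    toIcoMod (div_pos hp hc) 0 (t / c) = toIcoMod hp 0 t / c := by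
  obtain ⟨h0, hp'⟩ := toIcoMod_mem_Ico' hp t
  rw [toIcoMod_eq_iff, zero_add]
  refine ⟨⟨div_nonneg h0 hc.le, div_lt_div_of_pos_right hp' hc⟩, toIcoDiv hp 0 t, ?_⟩
  rw [zsmul_eq_mul, mul_div_assoc', ← add_div, ← zsmul_eq_mul, toIcoMod_add_toIcoDiv_zsmul]

lemma eventually_toIcoMod_add (hp : 0 < p) {t : ℝ} (ht : toIcoMod hp 0 t ≠ 0) :
    ∀ᶠ s in 𝓝 0, toIcoMod hp 0 (t + s) = toIcoMod hp 0 t + s := by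
  obtain ⟨h0, hp'⟩ := toIcoMod_mem_Ico' hp t
  have hnear : ∀ᶠ s in 𝓝 (0 : ℝ), toIcoMod hp 0 t + s ∈ Set.Ioo 0 p :=
    (continuous_const_add _).tendsto' 0 _ (add_zero _) |>.eventually
      (isOpen_Ioo.mem_nhds ⟨h0.lt_of_ne' ht, hp'⟩)
  filter_upwards [hnear] with s hs
  rw [toIcoMod_eq_iff, zero_add]
  refine ⟨Set.Ioo_subset_Ico_self hs, toIcoDiv hp 0 t, ?_⟩
  rw [add_right_comm, toIcoMod_add_toIcoDiv_zsmul]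

lemma mem_unitArc_iff_exists_int {a s : ℝ} :
    (s : AddCircle p) ∈ unitArc p a ↔ ∃ m : ℤ, s + m * p ∈ Set.Ioo a (a + 1) := by
  constructor
  · rintro ⟨u, hu, hus : (u : AddCircle p) = s⟩
    obtain ⟨m, hm⟩ := (AddCircle.coe_eq_zero_iff p).1
      (by rw [AddCircle.coe_sub, hus, sub_self] : ((u - s : ℝ) : AddCircle p) = 0)
    rw [zsmul_eq_mul] at hm
    exact ⟨m, by rwa [show s + m * p = u by linarith]⟩
  · rintro ⟨m, hm⟩
    refine ⟨_, hm, ?_⟩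
    show ((s + m * p : ℝ) : AddCircle p) = s
    rw [AddCircle.coe_add, ← zsmul_eq_mul, AddCircle.coe_zsmul, AddCircle.coe_period, smul_zero,
      add_zero]

lemma mem_unitArc_iff_toIcoMod (hp : 0 < p) (hp1 : 1 ≤ p) {a s : ℝ} :
    (s : AddCircle p) ∈ unitArc p a ↔ toIcoMod hp a s ∈ Set.Ioo a (a + 1) := by
  refine ⟨fun ⟨u, hu, hus⟩ => ?_, fun h => ⟨_, h, coe_toIcoMod hp a s⟩⟩
  rwa [(toIcoMod_eq_iff_coe_eq hp).2 ⟨⟨hu.1.le, by linarith [hu.2]⟩, hus⟩]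

lemma eq_of_natCast_mem_unitArc {n i j : ℕ} {a : ℝ} (hi : i < n) (hj : j < n)
    (hia : ((i : ℝ) : AddCircle (n : ℝ)) ∈ unitArc n a)
    (hja : ((j : ℝ) : AddCircle (n : ℝ)) ∈ unitArc n a) : i = j := by
  obtain ⟨m, hm⟩ := mem_unitArc_iff_exists_int.1 hia
  obtain ⟨m', hm'⟩ := mem_unitArc_iff_exists_int.1 hja
  have hlt : (i + m * n : ℤ) < j + m' * n + 1 := by
    exact_mod_cast (by linarith [hm.2, hm'.1] : (i + m * n : ℝ) < j + m' * n + 1)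
  have hgt : (j + m' * n : ℤ) < i + m * n + 1 := by
    exact_mod_cast (by linarith [hm.1, hm'.2] : (j + m' * n : ℝ) < i + m * n + 1)
  have heq := congrArg (· % (n : ℤ)) (by omega : (i + m * n : ℤ) = j + m' * n)
  simp only [Int.add_mul_emod_self_right] at heq
  rw [Int.emod_eq_of_lt (by omega) (by omega), Int.emod_eq_of_lt (by omega) (by omega)] at heq
  exact_mod_cast heq

lemma exists_eq_div_of_forall_coe_add_mem (hp : 1 ≤ p) (X : Finset (AddCircle p)) (t : ℝ)
    (hX : ∀ i : ℕ, ((t + i : ℝ) : AddCircle p) ∈ X) :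
    ∃ k d : ℕ, 1 ≤ d ∧ d ≤ k ∧ k ≤ #X ∧ p = k / d := by
  obtain ⟨i, j, hij, hf⟩ := Fintype.exists_ne_map_eq_of_card_lt
    (fun i : Fin (#X + 1) => (⟨_, hX i⟩ : X)) (by simp)
  wlog hlt : i < j generalizing i j
  · exact this j i hij.symm hf.symm (lt_of_le_of_ne (not_lt.1 hlt) hij.symm)
  set k := (j : ℕ) - i
  have hk : 0 < k := Nat.sub_pos_of_lt hlt
  have hk0 : ((k : ℝ) : AddCircle p) = 0 := by
    have hf' : ((t + i : ℝ) : AddCircle p) = ((t + j : ℝ) : AddCircle p) := congrArg Subtype.val hf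
    rw [Nat.cast_sub hlt.le, show (j - i : ℝ) = (t + j) - (t + i) by ring, AddCircle.coe_sub, hf',
      sub_self]
  obtain ⟨d, hd⟩ := (AddCircle.coe_eq_zero_of_pos_iff p (by linarith) (by positivity)).1 hk0
  rw [nsmul_eq_mul] at hd
  have hd0 : 1 ≤ d := Nat.one_le_iff_ne_zero.2 fun h =>
    hk.ne' (by exact_mod_cast (by simpa [h] using hd.symm : (k : ℝ) = 0))
  refine ⟨k, d, hd0, ?_, ?_, ?_⟩
  · exact_mod_cast (le_mul_of_one_le_right (Nat.cast_nonneg d) hp).trans hd.le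
  · omega
  · rw [← hd, mul_div_cancel_left₀ _ (by positivity)]

end UnitArc

section Digraph

variable {V : Type*} {E : V → V → Prop} {p : ℝ}

lemma acyclicOn_of_subsingleton (hE : ∀ v, ¬ E v v) {A : Set V} (hA : A.Subsingleton) :
    AcyclicOn E A := by
  rintro v (_ | ⟨w, l⟩) ⟨hnd, hch⟩ hall
  · exact hE v (List.isChain_cons_cons.1 hch).1
  · exact (List.nodup_cons.1 hnd).1 (by simp [hA (hall v (by simp)) (hall w (by simp))])

lemma exists_isAcyclicColouring_card [Fintype V] (hE : ∀ v, ¬ E v v) :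
    ∃ c : V → AddCircle (Fintype.card V : ℝ), IsAcyclicColouring E (Fintype.card V) c :=
  ⟨fun v => ((Fintype.equivFin V v : ℕ) : ℝ), fun _ => acyclicOn_of_subsingleton hE
    fun _ hu _ hw => (Fintype.equivFin V).injective
      (Fin.ext (eq_of_natCast_mem_unitArc (Fin.isLt _) (Fin.isLt _) hu hw))⟩

lemma isClosed_setOf_isAcyclicColouring (E : V → V → Prop) :
    IsClosed {q : ℝ × (V → ℝ) | IsAcyclicColouring E q.1 fun v => (q.2 v : AddCircle q.1)} := by
  simp only [IsAcyclicColouring, AcyclicOn, Set.mem_preimage, mem_unitArc_iff_exists_int,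
    Set.ofPred_forall]
  refine isClosed_iInter fun a => isClosed_iInter fun v => isClosed_iInter fun l =>
    isClosed_iInter fun _ => ?_
  rw [← Set.compl_ofPred, isClosed_compl_iff]
  simp only [Set.ofPred_forall, Set.ofPred_exists]
  refine Set.Finite.isOpen_biInter (X := ℝ × (V → ℝ)) (List.finite_toSet (v :: l)) fun b _ => ?_
  exact isOpen_iUnion fun m => isOpen_Ioo.preimage (by fun_prop)

lemma exists_isLeast_of_isAcyclicColouring {p₀ : ℝ} (hp₀ : 1 ≤ p₀) {c₀ : V → AddCircle p₀}
    (hc₀ : IsAcyclicColouring E p₀ c₀) :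
    ∃ p, ∃ x : V → ℝ,
      IsLeast {p : ℝ | 1 ≤ p ∧ ∃ c : V → AddCircle p, IsAcyclicColouring E p c} p ∧
      IsAcyclicColouring E p fun v => (x v : AddCircle p) := by
  set K := {q : ℝ × (V → ℝ) | IsAcyclicColouring E q.1 fun v => (q.2 v : AddCircle q.1)} ∩
    (Set.Icc 1 p₀ ×ˢ Set.univ.pi fun _ => Set.Icc 0 p₀)
  have hK : IsCompact K :=
    (isCompact_Icc.prod (isCompact_univ_pi fun _ => isCompact_Icc)).inter_left
      (isClosed_setOf_isAcyclicColouring E)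
  have hmemK : ∀ p, 1 ≤ p → p ≤ p₀ → ∀ c : V → AddCircle p, IsAcyclicColouring E p c →
      ∃ x, (p, x) ∈ K := by
    intro p hp1 hpp₀ c hc
    have : Fact (0 < p) := ⟨zero_lt_one.trans_le hp1⟩
    choose x hx hxc using fun v => AddCircle.eq_coe_Ico (c v)
    obtain rfl : (fun v => (x v : AddCircle p)) = c := funext hxc
    exact ⟨x, hc, ⟨hp1, hpp₀⟩, fun v _ => ⟨(hx v).1, (hx v).2.le.trans hpp₀⟩⟩
  obtain ⟨x₀, hx₀⟩ := hmemK p₀ hp₀ le_rfl c₀ hc₀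
  obtain ⟨⟨p, x⟩, ⟨hx, ⟨hp1, hpp₀⟩, -⟩, hmin⟩ :=
    hK.exists_isMinOn ⟨_, hx₀⟩ continuous_fst.continuousOn
  refine ⟨p, x, ⟨⟨hp1, _, hx⟩, ?_⟩, hx⟩
  rintro p' ⟨hp'1, c, hc⟩
  rcases le_or_gt p' p₀ with hp' | hp'
  · obtain ⟨x', hx'⟩ := hmemK p' hp'1 hp' c hc
    exact isMinOn_iff.1 hmin _ hx'
  · exact hpp₀.trans hp'.le

-- For `1 ≤ p` this is equivalent to `IsAcyclicColouring E p (↑x)`, but it is phrased through the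
-- forward gaps `x b - x a` modulo `p`, which survive small perturbations and rescaling.
def IsSpread (E : V → V → Prop) (hp : 0 < p) (x : V → ℝ) : Prop :=
  ∀ v l, IsDicycle E v l → ∀ a ∈ v :: l, ∃ b ∈ v :: l, 1 ≤ toIcoMod hp 0 (x b - x a)

lemma isSpread_of_isAcyclicColouring (hp : 0 < p) {x : V → ℝ}
    (hx : IsAcyclicColouring E p fun v => (x v : AddCircle p)) : IsSpread E hp x := by
  classical
  intro v l hvl a ha
  by_contra! hlt
  obtain ⟨b₀, hb₀, hmax⟩ := (v :: l).toFinset.exists_max_image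
    (fun b => toIcoMod hp 0 (x b - x a)) ⟨v, by simp⟩
  have hM := hlt b₀ (List.mem_toFinset.1 hb₀)
  -- the whole cycle lies in the open unit arc starting slightly before `x a`
  refine hx (x a - (1 - toIcoMod hp 0 (x b₀ - x a)) / 2) v l hvl fun b hb =>
    ⟨x a + toIcoMod hp 0 (x b - x a), ⟨?_, ?_⟩, ?_⟩
  · linarith [(toIcoMod_mem_Ico' hp (x b - x a)).1]
  · linarith [hmax b (List.mem_toFinset.2 hb)]
  · show ((x a + toIcoMod hp 0 (x b - x a) : ℝ) : AddCircle p) = x b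
    rw [AddCircle.coe_add, coe_toIcoMod, AddCircle.coe_sub, add_sub_cancel]

lemma isAcyclicColouring_of_isSpread (hp : 0 < p) (hp1 : 1 ≤ p) {x : V → ℝ}
    (hx : IsSpread E hp x) : IsAcyclicColouring E p fun v => (x v : AddCircle p) := by
  classical
  intro a v l hvl hall
  have ht : ∀ b ∈ v :: l, toIcoMod hp a (x b) ∈ Set.Ioo a (a + 1) := fun b hb =>
    (mem_unitArc_iff_toIcoMod hp hp1).1 (hall b hb)
  obtain ⟨a₀, ha₀, hmin⟩ := (v :: l).toFinset.exists_min_image (fun b => toIcoMod hp a (x b))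
    ⟨v, by simp⟩
  rw [List.mem_toFinset] at ha₀
  obtain ⟨b, hb, hgap⟩ := hx v l hvl a₀ ha₀
  have hb₀ := hmin b (List.mem_toFinset.2 hb)
  obtain ⟨-, hb₁⟩ := ht b hb
  obtain ⟨ha₁, -⟩ := ht a₀ ha₀
  have : toIcoMod hp 0 (x b - x a₀) = toIcoMod hp a (x b) - toIcoMod hp a (x a₀) := by
    rw [toIcoMod_eq_iff_coe_eq, AddCircle.coe_sub, coe_toIcoMod, coe_toIcoMod, AddCircle.coe_sub]
    exact ⟨⟨sub_nonneg.2 hb₀, by linarith⟩, rfl⟩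
  linarith

lemma IsSpread.of_gap_imp {q : ℝ} {hp : 0 < p} {hq : 0 < q} {x y : V → ℝ} (hx : IsSpread E hp x)
    (hxy : ∀ v w, 1 ≤ toIcoMod hp 0 (x w - x v) → 1 ≤ toIcoMod hq 0 (y w - y v)) :
    IsSpread E hq y := fun v l hvl a ha =>
  (hx v l hvl a ha).imp fun b ⟨hb, hab⟩ => ⟨hb, hxy a b hab⟩

lemma exists_height (x : V → ℝ) {X : Set (AddCircle p)} (hxX : ∀ v, (x v : AddCircle p) ∈ X)
    (hesc : ∀ v, ∃ i : ℕ, ((x v + i : ℝ) : AddCircle p) ∉ X) :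
    ∃ h : V → ℕ, ∀ v w, (x w : AddCircle p) = ((x v + 1 : ℝ) : AddCircle p) → h v = h w + 1 := by
  classical
  refine ⟨fun v => Nat.find (hesc v), fun v w hvw => ?_⟩
  have hshift (i : ℕ) :
      ((x v + (i + 1 : ℕ) : ℝ) : AddCircle p) = ((x w + i : ℝ) : AddCircle p) := by
    rw [show x v + ((i + 1 : ℕ) : ℝ) = (x v + 1) + i by push_cast; ring, AddCircle.coe_add,
      ← hvw, ← AddCircle.coe_add]
  have hesc' : ∃ i : ℕ, ((x v + (i + 1 : ℕ) : ℝ) : AddCircle p) ∉ X := by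
    simpa only [hshift] using hesc w
  show Nat.find (hesc v) = Nat.find (hesc w) + 1
  rw [Nat.find_comp_succ _ hesc' (by simpa using hxX v)]
  exact congrArg (· + 1) (Nat.find_congr' (by simp only [hshift, implies_true]))

lemma eventually_one_add_le_toIcoMod (hp : 0 < p) {t c : ℝ} (ht : 1 ≤ toIcoMod hp 0 t)
    (htight : toIcoMod hp 0 t = 1 → c = 1) :
    ∀ᶠ δ in 𝓝 (0 : ℝ), 1 + δ ≤ toIcoMod hp 0 (t + δ * c) := by
  have hlin : ∀ᶠ δ in 𝓝 (0 : ℝ), toIcoMod hp 0 (t + δ * c) = toIcoMod hp 0 t + δ * c :=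
    ((continuous_mul_const c).tendsto' 0 0 (zero_mul c)).eventually
      (eventually_toIcoMod_add hp (zero_lt_one.trans_le ht).ne')
  rcases ht.eq_or_lt with ht1 | ht1
  · filter_upwards [hlin] with δ hδ
    rw [hδ, ← ht1, htight ht1.symm, mul_one]
  · have h1 : Tendsto (fun δ : ℝ => 1 + δ) (𝓝 0) (𝓝 1) := by
      simpa using (continuous_const_add (1 : ℝ)).tendsto 0
    have h2 : Tendsto (fun δ : ℝ => toIcoMod hp 0 t + δ * c) (𝓝 0) (𝓝 (toIcoMod hp 0 t)) := by
      simpa using ((continuous_mul_const c).const_add _).tendsto 0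
    filter_upwards [hlin, h1.eventually_lt h2 ht1] with δ hδ hlt
    exact hδ ▸ hlt.le

lemma exists_perturbation_of_height [Finite V] (hp : 0 < p) (hp1 : 1 < p) (x : V → ℝ)
    (h : V → ℕ) (hh : ∀ v w, (x w : AddCircle p) = ((x v + 1 : ℝ) : AddCircle p) → h v = h w + 1) :
    ∃ δ, 0 < δ ∧ δ < p - 1 ∧ ∀ v w, 1 ≤ toIcoMod hp 0 (x w - x v) →
      1 + δ ≤ toIcoMod hp 0 ((x w - δ * h w) - (x v - δ * h v)) := by
  have hpair : ∀ v w, ∀ᶠ δ in 𝓝 (0 : ℝ), 1 ≤ toIcoMod hp 0 (x w - x v) →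
      1 + δ ≤ toIcoMod hp 0 ((x w - δ * h w) - (x v - δ * h v)) := by
    intro v w
    by_cases hgap : 1 ≤ toIcoMod hp 0 (x w - x v)
    · have htight : toIcoMod hp 0 (x w - x v) = 1 → (h v - h w : ℝ) = 1 := fun h1 => by
        have hcoe := ((toIcoMod_eq_iff_coe_eq hp).1 h1).2
        rw [hh v w (by rw [AddCircle.coe_add, hcoe, AddCircle.coe_sub, add_sub_cancel])]
        push_cast
        ring
      filter_upwards [eventually_one_add_le_toIcoMod hp hgap htight] with δ hδ _
      rwa [show (x w - δ * h w) - (x v - δ * h v) = x w - x v + δ * (h v - h w) by ring]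
    · exact Eventually.of_forall fun _ h1 => absurd h1 hgap
  have hall : ∀ᶠ δ in 𝓝[>] (0 : ℝ), (0 < δ ∧ δ < p - 1) ∧ ∀ v w,
      1 ≤ toIcoMod hp 0 (x w - x v) → 1 + δ ≤ toIcoMod hp 0 ((x w - δ * h w) - (x v - δ * h v)) :=
    (eventually_mem_nhdsWithin.and (nhdsWithin_le_nhds (gt_mem_nhds (by linarith)))).and
      (nhdsWithin_le_nhds (eventually_all.2 fun v => eventually_all.2 fun w => hpair v w))
  obtain ⟨δ, ⟨hδ, hδp⟩, hgap⟩ := hall.exists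
  exact ⟨δ, hδ, hδp, hgap⟩

lemma exists_lt_isAcyclicColouring_of_height [Finite V] (hp : 0 < p) (hp1 : 1 < p) {x : V → ℝ}
    (hx : IsSpread E hp x) {h : V → ℕ}
    (hh : ∀ v w, (x w : AddCircle p) = ((x v + 1 : ℝ) : AddCircle p) → h v = h w + 1) :
    ∃ q, 1 ≤ q ∧ q < p ∧ ∃ c : V → AddCircle q, IsAcyclicColouring E q c := by
  obtain ⟨δ, hδ, hδp, hgap⟩ := exists_perturbation_of_height hp hp1 x h hh
  have h1δ : 0 < 1 + δ := by linarith
  have hq1 : 1 ≤ p / (1 + δ) := by rw [le_div_iff₀ h1δ]; linarith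
  refine ⟨p / (1 + δ), hq1, div_lt_self hp (by linarith), _,
    isAcyclicColouring_of_isSpread (div_pos hp h1δ) hq1
      (hx.of_gap_imp (y := fun v => (x v - δ * h v) / (1 + δ)) fun v w hvw => ?_)⟩
  rw [← sub_div, toIcoMod_div hp h1δ, le_div_iff₀ h1δ, one_mul]
  exact hgap v w hvw

end Digraph

/-- `χ⃗*(D)` is a rational of the form `k/d`, `1 ≤ d ≤ k ≤ |V(D)|`. -/
theorem stmt2 {V : Type*} [Fintype V] [Nonempty V] (E : V → V → Prop)
    (hE : ∀ v, ¬ E v v) :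
    ∃ k d : ℕ, 1 ≤ d ∧ d ≤ k ∧ k ≤ Fintype.card V ∧
      starDichromatic E = (k : ℝ) / d := by
  classical
  obtain ⟨c₀, hc₀⟩ := exists_isAcyclicColouring_card hE
  obtain ⟨p, x, hleast, hx⟩ :=
    exists_isLeast_of_isAcyclicColouring (by exact_mod_cast Fintype.card_pos) hc₀
  have hstar : starDichromatic E = p := hleast.csInf_eq
  rcases hleast.1.1.eq_or_lt with rfl | hp1
  · exact ⟨1, 1, le_rfl, le_rfl, Fintype.card_pos, by simp [hstar]⟩
  have hp : 0 < p := zero_lt_one.trans hp1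
  set X := univ.image fun v => (x v : AddCircle p)
  by_cases horbit : ∃ v, ∀ i : ℕ, ((x v + i : ℝ) : AddCircle p) ∈ X
  · obtain ⟨v, hv⟩ := horbit
    obtain ⟨k, d, hd, hdk, hkX, hpkd⟩ := exists_eq_div_of_forall_coe_add_mem hp1.le X (x v) hv
    exact ⟨k, d, hd, hdk, hkX.trans (card_image_le.trans_eq card_univ), hstar.trans hpkd⟩
  · push Not at horbit
    obtain ⟨h, hh⟩ := exists_height (p := p) x (X := ↑X) (fun v => by simp [X]) horbit
    obtain ⟨q, hq1, hqp, hq⟩ :=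
      exists_lt_isAcyclicColouring_of_height hp hp1 (isSpread_of_isAcyclicColouring hp hx) hh
    exact absurd (hleast.2 ⟨hq1, hq⟩) hqp.not_ge
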